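/- Consider the context-free grammar G = {x → xy, y → xy} with formal derivative D (a derivation on the polynomial ring in x, y satisfying D(x) = xy and D(y) = xy). Then for all n ≥ 1, D^n(x) = x·Σ_{k=0}^{n-1} A(n,k)·x^k·y^{n-k}, where A(n,k) is the Eulerian number counting permutations of [n] with k descents. -/

import Mathlib

open Finset Polynomial

/-- `pval π i` is the value `π(i+1)` of the permutation in one-based value convention
(values `1,…,n`), and `0` for indices out of range. -/
def pval {n : ℕ} (π : Equiv.Perm (Fin n)) (i : ℕ) : ℕ :=
  if h : i < n then (π ⟨i, h⟩ : ℕ) + 1 else 0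

/-- number of descents of `π` -/
def descents {n : ℕ} (π : Equiv.Perm (Fin n)) : ℕ :=
  ((Finset.range (n - 1)).filter (fun i => pval π (i+1) < pval π i)).card

/-- Eulerian number `A(n,k)`: the number of permutations of `[n]` with `k` descents -/
def eulerianNum (n k : ℕ) : ℕ :=
  (Finset.univ.filter (fun π : Equiv.Perm (Fin n) => descents π = k)).card

/-!
Write `d(π)` for the number of descents of the word `π(1) ⋯ π(n) 0`, so that
`d(π) = des π + 1` for `n ≥ 1`, and `Pₙ = ∑_{π ∈ Sₙ} x^{d(π)} y^{n+1-d(π)}`; then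
`x · ∑ₖ A(n,k) xᵏ yⁿ⁻ᵏ = Pₙ`. Every permutation of `[n+1]` arises exactly once by inserting
the value `n+1` into some `σ ∈ Sₙ` at one of `n+1` slots. Inserting it into one of the `d(σ)`
slots just after a descent keeps `d`, while each of the other `n+1-d(σ)` slots raises `d` by one.
Since `D(xᵃ yᵇ) = a xᵃ yᵇ⁺¹ + b xᵃ⁺¹ yᵇ`, this says `D Pₙ = Pₙ₊₁`, and `P₁ = xy = D x`.
-/

open Equiv

section Descents

variable {n : ℕ}

lemma Fin.val_succAbove (p : Fin (n + 1)) (i : Fin n) :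
    (p.succAbove i : ℕ) = if (i : ℕ) < p then (i : ℕ) else i + 1 := by
  unfold Fin.succAbove
  split_ifs <;> simp_all [Fin.lt_def]

/-- Insert the largest value `n` (zero-based) at position `j`. -/
def insertMax (σ : Perm (Fin n)) (j : Fin (n + 1)) : Perm (Fin (n + 1)) :=
  (finSuccEquiv' j).trans ((Equiv.optionCongr σ).trans (finSuccEquiv' (Fin.last n)).symm)

@[simp]
lemma insertMax_apply_self (σ : Perm (Fin n)) (j : Fin (n + 1)) :
    insertMax σ j j = Fin.last n := by
  simp [insertMax, finSuccEquiv'_at, finSuccEquiv'_symm_none]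

@[simp]
lemma insertMax_apply_succAbove (σ : Perm (Fin n)) (j : Fin (n + 1)) (i : Fin n) :
    insertMax σ j (j.succAbove i) = (σ i).castSucc := by
  simp [insertMax, finSuccEquiv'_succAbove, finSuccEquiv'_symm_some, Fin.succAbove_last]

lemma insertMax_bijective :
    Function.Bijective fun p : Perm (Fin n) × Fin (n + 1) => insertMax p.1 p.2 := by
  refine (Fintype.bijective_iff_injective_and_card _).2 ⟨?_, ?_⟩
  · rintro ⟨σ, j⟩ ⟨τ, k⟩ h
    dsimp only at h
    obtain rfl : j = k := (insertMax τ k).injective <| by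
      rw [insertMax_apply_self, ← h, insertMax_apply_self]
    obtain rfl : σ = τ := by
      ext i
      simpa using congrArg Fin.val (congrArg (· (j.succAbove i)) h)
    rfl
  · simp [Fintype.card_perm, Nat.factorial_succ, mul_comm]

lemma sum_perm_fin_succ {M : Type*} [AddCommMonoid M] (f : Perm (Fin (n + 1)) → M) :
    ∑ τ, f τ = ∑ σ : Perm (Fin n), ∑ j, f (insertMax σ j) := by
  rw [← Fintype.sum_prod_type']
  exact (Fintype.sum_bijective _ insertMax_bijective _ _ fun _ => rfl).symm

lemma pval_eq_zero (σ : Perm (Fin n)) {a : ℕ} (h : n ≤ a) : pval σ a = 0 :=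
  dif_neg (by omega)

lemma pval_pos (σ : Perm (Fin n)) {a : ℕ} (h : a < n) : 0 < pval σ a := by
  simp [pval, h]

lemma pval_le (σ : Perm (Fin n)) (a : ℕ) : pval σ a ≤ n := by
  unfold pval; split
  · exact Fin.is_lt _
  · exact Nat.zero_le _

lemma pval_insertMax_succAbove (σ : Perm (Fin n)) (j : Fin (n + 1)) (i : Fin n) :
    pval (insertMax σ j) (j.succAbove i) = pval σ i := by
  simp [pval, (j.succAbove i).is_lt]

lemma pval_insertMax (σ : Perm (Fin n)) (j : Fin (n + 1)) (a : ℕ) :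
    pval (insertMax σ j) a =
      if a = j then n + 1 else if a < j then pval σ a else pval σ (a - 1) := by
  rcases lt_or_ge a (n + 1) with ha | ha
  · by_cases haj : a = j
    · obtain rfl : (⟨a, ha⟩ : Fin (n + 1)) = j := Fin.ext haj
      simp [pval, ha]
    obtain ⟨i, hi⟩ := Fin.exists_succAbove_eq (x := ⟨a, ha⟩) (y := j) (fun h => haj (by rw [← h]))
    obtain rfl : a = j.succAbove i := congrArg Fin.val hi.symm
    rw [pval_insertMax_succAbove, if_neg haj, Fin.val_succAbove]
    split_ifs <;> first | omega | simp
  · rw [pval_eq_zero _ ha, if_neg (by omega), if_neg (by omega), pval_eq_zero _ (by omega)]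

lemma pval_insertMax_succAbove_add_one (σ : Perm (Fin n)) (j : Fin (n + 1)) (i : Fin n) :
    pval (insertMax σ j) ((j.succAbove i : ℕ) + 1) =
      if (i : ℕ) + 1 = j then n + 1 else pval σ ((i : ℕ) + 1) := by
  rw [pval_insertMax, Fin.val_succAbove]
  split_ifs <;> first | omega | rfl

/-- Descents of the word `π(1) ⋯ π(n) 0`: since `pval` vanishes past the end, the last
position `n - 1` is always one. -/
def paddedDescentSet (σ : Perm (Fin n)) : Finset (Fin n) :=
  {i | pval σ ((i : ℕ) + 1) < pval σ i}

lemma mem_paddedDescentSet {σ : Perm (Fin n)} {i : Fin n} :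
    i ∈ paddedDescentSet σ ↔ pval σ ((i : ℕ) + 1) < pval σ i := by
  simp [paddedDescentSet]

lemma paddedDescentSet_insertMax (σ : Perm (Fin n)) (j : Fin (n + 1)) :
    paddedDescentSet (insertMax σ j) =
      insert j ({i ∈ paddedDescentSet σ | i.succ ≠ j}.map j.succAboveEmb) := by
  ext k
  induction k using Fin.succAboveCases j with
  | x =>
    simpa [mem_paddedDescentSet, pval_insertMax] using Nat.lt_succ_of_le (pval_le σ j)
  | p i =>
    simp only [mem_insert, Fin.succAbove_ne, false_or, mem_map, mem_filter, Fin.coe_succAboveEmb,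
      Fin.succAbove_right_inj, exists_eq_right, mem_paddedDescentSet, pval_insertMax_succAbove,
      pval_insertMax_succAbove_add_one]
    rw [ne_eq, Fin.ext_iff, Fin.val_succ]
    split_ifs with h
    · simpa [h] using (pval_le σ i).trans n.le_succ
    · simp [h]

lemma card_paddedDescentSet_insertMax (σ : Perm (Fin n)) (j : Fin (n + 1)) :
    #(paddedDescentSet (insertMax σ j)) =
      if j ∈ (paddedDescentSet σ).map (Fin.succEmb n) then #(paddedDescentSet σ)
      else #(paddedDescentSet σ) + 1 := by
  have hfilter : #{i ∈ paddedDescentSet σ | i.succ ≠ j} =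
      #(((paddedDescentSet σ).map (Fin.succEmb n)).erase j) := by
    rw [← filter_ne', filter_map, card_map]
    rfl
  rw [paddedDescentSet_insertMax, card_insert_of_notMem (by simp), card_map, hfilter,
    card_erase_eq_ite]
  split_ifs with h
  · have := card_pos.2 ⟨j, h⟩
    rw [card_map] at this ⊢
    omega
  · rw [card_map]

lemma card_paddedDescentSet_le (σ : Perm (Fin n)) : #(paddedDescentSet σ) ≤ n :=
  (card_le_univ _).trans_eq (Fintype.card_fin n)

lemma card_paddedDescentSet_eq_descents_add_one (σ : Perm (Fin (n + 1))) :
    #(paddedDescentSet σ) = descents σ + 1 := by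
  rw [paddedDescentSet, card_filter, Fin.sum_univ_eq_sum_range
    (fun i => if pval σ (i + 1) < pval σ i then 1 else 0), sum_range_succ, descents,
    Nat.add_sub_cancel, card_filter, if_pos]
  rw [pval_eq_zero σ le_rfl]
  exact pval_pos σ n.lt_succ_self

end Descents

section Derivation

variable {R A : Type*} [CommSemiring R] [CommSemiring A] [Algebra R A]
  {D : Derivation R A A} {x y : A}

lemma Derivation.apply_pow_mul_pow (hx : D x = x * y) (hy : D y = x * y) (a b : ℕ) :
    D (x ^ a * y ^ b) = a • (x ^ a * y ^ (b + 1)) + b • (x ^ (a + 1) * y ^ b) := by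
  rw [Derivation.leibniz, Derivation.leibniz_pow, Derivation.leibniz_pow, hx, hy]
  rcases a with _ | a <;> rcases b with _ | b <;> simp [pow_succ] <;> ring

def descentPoly (x y : A) (n : ℕ) : A :=
  ∑ σ : Perm (Fin n), x ^ #(paddedDescentSet σ) * y ^ (n + 1 - #(paddedDescentSet σ))

lemma Derivation.apply_descentPoly (hx : D x = x * y) (hy : D y = x * y) (n : ℕ) :
    D (descentPoly x y n) = descentPoly x y (n + 1) := by
  rw [descentPoly, descentPoly, map_sum, sum_perm_fin_succ]
  refine sum_congr rfl fun σ _ => ?_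
  set k := #(paddedDescentSet σ)
  set slots := (paddedDescentSet σ).map (Fin.succEmb n)
  have hslot : ∀ j, x ^ #(paddedDescentSet (insertMax σ j)) *
        y ^ (n + 1 + 1 - #(paddedDescentSet (insertMax σ j))) =
      if j ∈ slots then x ^ k * y ^ (n + 1 - k + 1) else x ^ (k + 1) * y ^ (n + 1 - k) := by
    intro j
    have := card_paddedDescentSet_le σ
    rw [card_paddedDescentSet_insertMax]
    split_ifs <;> congr 2 <;> omega
  rw [Derivation.apply_pow_mul_pow hx hy, sum_congr rfl fun j _ => hslot j, sum_ite,
    sum_const, sum_const, filter_mem_eq_inter, univ_inter, filter_not, filter_mem_eq_inter,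
    univ_inter, card_univ_sdiff, card_map, Fintype.card_fin]

lemma Derivation.iterate_apply_descentPoly (hx : D x = x * y) (hy : D y = x * y) (n k : ℕ) :
    (⇑D)^[k] (descentPoly x y n) = descentPoly x y (n + k) := by
  induction k with
  | zero => rfl
  | succ k ih => rw [Function.iterate_succ_apply', ih, D.apply_descentPoly hx hy, add_assoc]

lemma descentPoly_one : descentPoly x y 1 = x * y := by
  simp [descentPoly, card_paddedDescentSet_eq_descents_add_one, descents]

lemma descentPoly_eq_sum_eulerianNum (n : ℕ) :
    descentPoly x y (n + 1) =
      x * ∑ k ∈ range (n + 1), (eulerianNum (n + 1) k : A) * x ^ k * y ^ (n + 1 - k) := by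
  have hmaps : ∀ σ ∈ (univ : Finset (Perm (Fin (n + 1)))), descents σ ∈ range (n + 1) :=
    fun σ _ => mem_range.2 (Nat.lt_succ_of_le ((card_filter_le _ _).trans (by simp)))
  rw [descentPoly, ← sum_fiberwise_of_maps_to hmaps, mul_sum]
  refine sum_congr rfl fun k _ => ?_
  rw [sum_congr rfl fun σ hσ => by
      rw [card_paddedDescentSet_eq_descents_add_one, (mem_filter.1 hσ).2],
    sum_const, eulerianNum, nsmul_eq_mul, Nat.add_sub_add_right]
  ring

end Derivation

/-- For the grammar `G = {x → xy, y → xy}` (here `x = X 0`, `y = X 1`):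
`Dⁿ(x) = x·∑_{k=0}^{n-1} A(n,k) x^k y^{n-k}` for `n ≥ 1`. -/
theorem stmt11
    (D : Derivation ℤ (MvPolynomial (Fin 2) ℤ) (MvPolynomial (Fin 2) ℤ))
    (hx : D (MvPolynomial.X 0) = MvPolynomial.X 0 * MvPolynomial.X 1)
    (hy : D (MvPolynomial.X 1) = MvPolynomial.X 0 * MvPolynomial.X 1) :
    ∀ n : ℕ, 1 ≤ n →
      (⇑D)^[n] (MvPolynomial.X 0)
        = MvPolynomial.X 0 * ∑ k ∈ Finset.range n,
            (eulerianNum n k : MvPolynomial (Fin 2) ℤ)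
              * MvPolynomial.X 0 ^ k * MvPolynomial.X 1 ^ (n - k) := by
  intro n hn
  obtain ⟨m, rfl⟩ := Nat.exists_eq_add_of_le' hn
  rw [Function.iterate_succ_apply, hx, ← descentPoly_one, D.iterate_apply_descentPoly hx hy,
    add_comm, descentPoly_eq_sum_eulerianNum]
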